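/- In the discrete-time right-censored setting, define D^R = Σ_{s ≤ t} ((2Z−1)/γ(Z|X)) · ((1 − F(t|Z,X))/((1 − F(s|Z,X)) G(s−|Z,X))) · (dN(s) − 1(T̃ ≥ s)λ(s|Z,X)), where F is the conditional CIF of T given (Z,X), G the conditional survival of C given (Z,X), λ the conditional hazard of T, and γ(z|X)=P(Z=z|X)∈(0,1). Assume T ⊥ C | (Z,X) and G(s−|Z,X) > 0, F(s|Z,X) < 1 for s ≤ t. Then E(D^R | Z, X) = 0 a.s., and hence E(D^R) = 0. -/

import Mathlib

open MeasureTheory ProbabilityTheory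

/-!
Write `m = σ(Z, X)`, `Y(s) = 1(T̃ ≥ s)` and `λ(s) = P(T = s | m) / P(T ≥ s | m)`. Then
`D^R = ∑_{s ≤ t} w_s (dN(s) - Y(s) λ(s))` with `m`-measurable weights `w_s`. Noninformative
censoring factorises `E[dN(s) | m] = P(T = s | m) G(s-)` and `E[Y(s) | m] = P(T ≥ s | m) G(s-)`,
so every compensated increment has conditional mean zero, and the weights pull out of the
conditional expectation. The weights need not be integrable, so they are pulled out of the whole
finite sum at once, as the first argument of a continuous bilinear form. Positivity `F(s) < 1`
makes `P(T ≥ s | m) > 0`, which identifies the given hazard with the bounded ratio `λ(s)`.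
-/

theorem ite_one_zero_eq_indicator {Ω : Type*} (P : Ω → Prop) [DecidablePred P] :
    (fun ω => if P ω then (1 : ℝ) else 0) = {ω | P ω}.indicator fun _ => 1 := by
  ext ω
  simp [Set.indicator_apply]

section

variable {Ω : Type*} {m mΩ : MeasurableSpace Ω} {μ : Measure[mΩ] Ω}

theorem condExp_sum_mul_of_aestronglyMeasurable_left {ι : Type*} [Fintype ι] {w g : ι → Ω → ℝ}
    (hw : ∀ i, AEStronglyMeasurable[m] (w i) μ) (hg : ∀ i, Integrable (g i) μ)
    (hwg : Integrable (fun ω => ∑ i, w i ω * g i ω) μ) :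
    μ[fun ω => ∑ i, w i ω * g i ω | m] =ᵐ[μ] fun ω => ∑ i, w i ω * μ[g i | m] ω := by
  let B : (ι → ℝ) →L[ℝ] (ι → ℝ) →L[ℝ] ℝ :=
    ∑ i, (ContinuousLinearMap.mul ℝ ℝ).bilinearComp (.proj i) (.proj i)
  have hB : ∀ v u, B v u = ∑ i, v i * u i := by simp [B]
  have hW : AEStronglyMeasurable[m] (fun ω i => w i ω) μ := by
    refine ⟨fun ω i => (hw i).mk _ ω, ?_, ?_⟩
    · exact (@measurable_pi_lambda _ _ _ m _ _
        fun i => (hw i).stronglyMeasurable_mk.measurable).stronglyMeasurable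
    · filter_upwards [ae_all_iff.2 fun i => (hw i).ae_eq_mk] with ω hω using funext hω
  have hG : Integrable (fun ω i => g i ω) μ := Integrable.of_eval hg
  have hpull := condExp_bilin_of_aestronglyMeasurable_left B hW (by simpa only [hB]) hG
  have hcoord : ∀ᵐ ω ∂μ, ∀ i, μ[fun ω i => g i ω | m] ω i = μ[g i | m] ω :=
    ae_all_iff.2 fun i => (ContinuousLinearMap.proj i).comp_condExp_comm hG
  filter_upwards [hpull, hcoord] with ω hω hωi
  simp only [hB] at hω
  simp only [hω, hωi]

theorem MeasureTheory.AEStronglyMeasurable.ite {p : Ω → Prop} [DecidablePred p] {f g : Ω → ℝ}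
    (hp : MeasurableSet[m] {ω | p ω}) (hf : AEStronglyMeasurable[m] f μ)
    (hg : AEStronglyMeasurable[m] g μ) :
    AEStronglyMeasurable[m] (fun ω => if p ω then f ω else g ω) μ := by
  refine ⟨fun ω => if p ω then hf.mk f ω else hg.mk g ω,
    hf.stronglyMeasurable_mk.ite hp hg.stronglyMeasurable_mk, ?_⟩
  filter_upwards [hf.ae_eq_mk, hg.ae_eq_mk] with ω hfω hgω
  split_ifs <;> assumption

theorem aestronglyMeasurable_of_ae_eq_condExp {m' : MeasurableSpace Ω} (hm' : m' ≤ m)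
    {f g : Ω → ℝ} (h : f =ᵐ[μ] μ[g | m']) : AEStronglyMeasurable[m] f μ :=
  (stronglyMeasurable_condExp.mono hm').aestronglyMeasurable.congr h.symm

theorem integrable_ite_one_zero [IsFiniteMeasure μ] {P : Ω → Prop} [DecidablePred P]
    (hP : MeasurableSet {ω | P ω}) : Integrable (fun ω => if P ω then (1 : ℝ) else 0) μ :=
  ite_one_zero_eq_indicator P ▸ (integrable_const 1).indicator hP

theorem condExp_ite_and_eq_mul [StandardBorelSpace Ω] [IsFiniteMeasure μ] {β γ : Type*}
    [MeasurableSpace β] [MeasurableSpace γ] (hm : m ≤ mΩ) {T : Ω → β} {C : Ω → γ}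
    (hT : Measurable T) (hC : Measurable C) (hindep : CondIndepFun m hm T C μ)
    {P : β → Prop} {Q : γ → Prop} [DecidablePred P] [DecidablePred Q]
    (hP : MeasurableSet {x | P x}) (hQ : MeasurableSet {y | Q y}) :
    μ[fun ω => if P (T ω) ∧ Q (C ω) then (1 : ℝ) else 0 | m] =ᵐ[μ]
      μ[fun ω => if P (T ω) then (1 : ℝ) else 0 | m] *
        μ[fun ω => if Q (C ω) then (1 : ℝ) else 0 | m] := by
  rw [ite_one_zero_eq_indicator fun ω => P (T ω) ∧ Q (C ω),
    ite_one_zero_eq_indicator fun ω => P (T ω), ite_one_zero_eq_indicator fun ω => Q (C ω)]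
  exact (condIndepFun_iff_condExp_inter_preimage_eq_mul hT hC).1 hindep _ _ hP hQ

end

noncomputable def condHazard {Ω : Type*} {mΩ : MeasurableSpace Ω} (μ : Measure Ω)
    (m : MeasurableSpace Ω) (T : Ω → ℕ) (s : ℕ) : Ω → ℝ :=
  μ[fun ω => if T ω = s then 1 else 0 | m] / μ[fun ω => if s ≤ T ω then 1 else 0 | m]

/-- `dN(s) - 1(T̃ ≥ s) λ(s)` for the observation `(T̃, Δ) = (T ∧ C, 1(T ≤ C))`: the event
`T̃ = s, Δ = 1` is `T = s ≤ C`. -/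
noncomputable def compensatedIncrement {Ω : Type*} {mΩ : MeasurableSpace Ω} (μ : Measure Ω)
    (m : MeasurableSpace Ω) (T C : Ω → ℕ) (s : ℕ) : Ω → ℝ :=
  (fun ω => if T ω = s ∧ s ≤ C ω then 1 else 0) -
    (fun ω => if s ≤ T ω ∧ s ≤ C ω then 1 else 0) * condHazard μ m T s

section

variable {Ω : Type*} {m mΩ : MeasurableSpace Ω} {μ : Measure[mΩ] Ω} {T : Ω → ℕ}

theorem stronglyMeasurable_condHazard (T : Ω → ℕ) (s : ℕ) :
    StronglyMeasurable[m] (condHazard μ m T s) :=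
  (stronglyMeasurable_condExp.measurable.div
    stronglyMeasurable_condExp.measurable).stronglyMeasurable

theorem ae_eq_condHazard {L : Ω → ℝ} {s : ℕ}
    (hL : (fun ω => L ω * μ[fun ω => if s ≤ T ω then (1 : ℝ) else 0 | m] ω) =ᵐ[μ]
      μ[fun ω => if T ω = s then (1 : ℝ) else 0 | m])
    (hpos : ∀ᵐ ω ∂μ, 0 < μ[fun ω => if s ≤ T ω then (1 : ℝ) else 0 | m] ω) :
    L =ᵐ[μ] condHazard μ m T s := by
  filter_upwards [hL, hpos] with ω hLω hposω
  rw [condHazard, Pi.div_apply, eq_div_iff hposω.ne']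
  exact hLω

variable [IsFiniteMeasure μ]

theorem condExp_eq_nonneg_and_le_condExp_ge (hT : Measurable T) (s : ℕ) :
    ∀ᵐ ω ∂μ, 0 ≤ μ[fun ω => if T ω = s then (1 : ℝ) else 0 | m] ω ∧
      μ[fun ω => if T ω = s then (1 : ℝ) else 0 | m] ω ≤
        μ[fun ω => if s ≤ T ω then (1 : ℝ) else 0 | m] ω := by
  have hnonneg : 0 ≤ᵐ[μ] μ[fun ω => if T ω = s then (1 : ℝ) else 0 | m] :=
    condExp_nonneg (ae_of_all _ fun ω => by dsimp only; split_ifs <;> norm_num)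
  have hmono := condExp_mono (m := m)
    (integrable_ite_one_zero (μ := μ) (P := fun ω => T ω = s) (hT (measurableSet_singleton s)))
    (integrable_ite_one_zero (μ := μ) (P := fun ω => s ≤ T ω) (hT measurableSet_Ici))
    (ae_of_all _ fun ω => by dsimp only; split_ifs <;> first | omega | norm_num)
  filter_upwards [hnonneg, hmono] with ω h0 h1 using ⟨h0, h1⟩

theorem abs_condHazard_le_one (hT : Measurable T) (s : ℕ) :
    ∀ᵐ ω ∂μ, |condHazard μ m T s ω| ≤ 1 := by
  filter_upwards [condExp_eq_nonneg_and_le_condExp_ge (m := m) hT s] with ω ⟨h0, h1⟩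
  rw [condHazard, Pi.div_apply, abs_le]
  exact ⟨by have := div_nonneg h0 (h0.trans h1); linarith, div_le_one_of_le₀ h1 (h0.trans h1)⟩

theorem condHazard_mul_condExp (hT : Measurable T) (s : ℕ) :
    condHazard μ m T s * μ[fun ω => if s ≤ T ω then 1 else 0 | m] =ᵐ[μ]
      μ[fun ω => if T ω = s then 1 else 0 | m] := by
  filter_upwards [condExp_eq_nonneg_and_le_condExp_ge (m := m) hT s] with ω ⟨h0, h1⟩
  rw [Pi.mul_apply, condHazard, Pi.div_apply]
  rcases (h0.trans h1).eq_or_lt with h | h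
  · rw [← h, mul_zero, le_antisymm (h1.trans h.ge) h0]
  · exact div_mul_cancel₀ _ h.ne'

theorem one_sub_condExp_le_le_condExp_ge (hm : m ≤ mΩ) (hT : Measurable T) (s : ℕ) :
    ∀ᵐ ω ∂μ, 1 - μ[fun ω => if T ω ≤ s then (1 : ℝ) else 0 | m] ω ≤
      μ[fun ω => if s ≤ T ω then (1 : ℝ) else 0 | m] ω := by
  have hle := integrable_ite_one_zero (μ := μ) (P := fun ω => T ω ≤ s) (hT measurableSet_Iic)
  have hge := integrable_ite_one_zero (μ := μ) (P := fun ω => s ≤ T ω) (hT measurableSet_Ici)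
  have hcover : (fun _ => (1 : ℝ)) ≤ᵐ[μ]
      (fun ω => if T ω ≤ s then (1 : ℝ) else 0) + fun ω => if s ≤ T ω then (1 : ℝ) else 0 :=
    ae_of_all _ fun ω => by
      simp only [Pi.add_apply]
      split_ifs <;> first | omega | norm_num
  filter_upwards [condExp_mono (m := m) (integrable_const 1) (hle.add hge) hcover,
    condExp_add hle hge m] with ω h1 h2
  rw [condExp_const hm, h2, Pi.add_apply] at h1
  linarith

theorem integrable_ite_mul_condHazard (hm : m ≤ mΩ) (hT : Measurable T) {P : Ω → Prop}
    [DecidablePred P] (hP : MeasurableSet {ω | P ω}) (s : ℕ) :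
    Integrable ((fun ω => if P ω then (1 : ℝ) else 0) * condHazard μ m T s) μ :=
  (integrable_ite_one_zero hP).mul_bdd
    ((stronglyMeasurable_condHazard (m := m) T s).mono hm).aestronglyMeasurable
    (by simpa only [Real.norm_eq_abs] using abs_condHazard_le_one (m := m) hT s)

theorem integrable_compensatedIncrement (hm : m ≤ mΩ) {C : Ω → ℕ} (hT : Measurable T)
    (hC : Measurable C) (s : ℕ) : Integrable (compensatedIncrement μ m T C s) μ :=
  (integrable_ite_one_zero (μ := μ) (P := fun ω => T ω = s ∧ s ≤ C ω)
    ((hT (measurableSet_singleton s)).inter (hC measurableSet_Ici))).sub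
    (integrable_ite_mul_condHazard hm hT (P := fun ω => s ≤ T ω ∧ s ≤ C ω)
      ((hT measurableSet_Ici).inter (hC measurableSet_Ici)) s)

theorem condExp_compensatedIncrement [StandardBorelSpace Ω] (hm : m ≤ mΩ) {C : Ω → ℕ}
    (hT : Measurable T) (hC : Measurable C) (hindep : CondIndepFun m hm T C μ) (s : ℕ) :
    μ[compensatedIncrement μ m T C s | m] =ᵐ[μ] 0 := by
  have hN := condExp_ite_and_eq_mul hm hT hC hindep (P := (· = s)) (Q := (s ≤ ·))
    (measurableSet_singleton s) measurableSet_Ici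
  have hY := condExp_ite_and_eq_mul hm hT hC hindep (P := (s ≤ ·)) (Q := (s ≤ ·))
    measurableSet_Ici measurableSet_Ici
  have hNm : MeasurableSet {ω | T ω = s ∧ s ≤ C ω} :=
    (hT (measurableSet_singleton s)).inter (hC measurableSet_Ici)
  have hYm : MeasurableSet {ω | s ≤ T ω ∧ s ≤ C ω} :=
    (hT measurableSet_Ici).inter (hC measurableSet_Ici)
  have hsub := condExp_sub (m := m) (integrable_ite_one_zero (μ := μ) hNm)
    (integrable_ite_mul_condHazard hm hT hYm s)
  have hpull := condExp_mul_of_stronglyMeasurable_right (stronglyMeasurable_condHazard T s)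
    (integrable_ite_mul_condHazard hm hT hYm s) (integrable_ite_one_zero (μ := μ) hYm)
  filter_upwards [hsub, hpull, hN, hY, condHazard_mul_condExp (m := m) hT s]
    with ω hsubω hpullω hNω hYω hhazω
  simp only [Pi.sub_apply, Pi.mul_apply] at hsubω hpullω hNω hYω hhazω
  rw [compensatedIncrement, Pi.zero_apply, hsubω, hpullω, hNω, hYω, ← hhazω]
  ring

theorem condExp_sum_mul_compensatedIncrement [StandardBorelSpace Ω] (hm : m ≤ mΩ)
    {C : Ω → ℕ} (hT : Measurable T) (hC : Measurable C) (hindep : CondIndepFun m hm T C μ)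
    {n : ℕ} {w : Fin n → Ω → ℝ} (hw : ∀ s, AEStronglyMeasurable[m] (w s) μ)
    (hint : Integrable (fun ω => ∑ s, w s ω * compensatedIncrement μ m T C s ω) μ) :
    μ[fun ω => ∑ s, w s ω * compensatedIncrement μ m T C s ω | m] =ᵐ[μ] 0 := by
  filter_upwards [condExp_sum_mul_of_aestronglyMeasurable_left hw
      (fun s => integrable_compensatedIncrement hm hT hC s) hint,
    ae_all_iff.2 fun s : Fin n => condExp_compensatedIncrement hm hT hC hindep s] with ω h hs
  simp [h, hs]

end

theorem outcome_augmentation_mean_zero_general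
    {Ω : Type*} [mΩ : MeasurableSpace Ω] [StandardBorelSpace Ω]
    (μ : Measure Ω) [IsProbabilityMeasure μ]
    (T C : Ω → ℕ) (Z X : Ω → ℝ) (t : ℕ)
    (hT : Measurable T) (hC : Measurable C)
    (hZXle : MeasurableSpace.comap (fun ω => (Z ω, X ω)) inferInstance ≤ mΩ)
    -- noninformative censoring given (Z,X)
    (hindep : CondIndepFun (MeasurableSpace.comap (fun ω => (Z ω, X ω)) inferInstance)
      hZXle T C μ)
    -- conditional CIF F(s|Z,X) = P(T ≤ s | Z,X)
    (F : ℕ → ℝ × ℝ → ℝ)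
    (hF : ∀ s : ℕ, (fun ω => F s (Z ω, X ω)) =ᵐ[μ]
      μ[fun ω => if T ω ≤ s then (1 : ℝ) else 0|
        MeasurableSpace.comap (fun ω => (Z ω, X ω)) inferInstance])
    -- left-limit censoring survival G(s−|Z,X) = P(C ≥ s | Z,X)
    (Gm : ℕ → ℝ × ℝ → ℝ)
    (hGm : ∀ s : ℕ, (fun ω => Gm s (Z ω, X ω)) =ᵐ[μ]
      μ[fun ω => if s ≤ C ω then (1 : ℝ) else 0|
        MeasurableSpace.comap (fun ω => (Z ω, X ω)) inferInstance])
    -- discrete hazard λ(s|Z,X) : λ·P(T ≥ s|Z,X) = P(T = s|Z,X)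
    (lam : ℕ → ℝ × ℝ → ℝ)
    (hlam : ∀ s : ℕ,
      (fun ω => lam s (Z ω, X ω) *
          ((μ[fun ω' => if s ≤ T ω' then (1 : ℝ) else 0|
            MeasurableSpace.comap (fun ω' => (Z ω', X ω')) inferInstance]) ω)) =ᵐ[μ]
        μ[fun ω => if T ω = s then (1 : ℝ) else 0|
          MeasurableSpace.comap (fun ω => (Z ω, X ω)) inferInstance])
    -- instrument prevalence γ(1|X) = P(Z=1|X) ∈ (0,1)
    (g1 : ℝ → ℝ)
    (hg1 : (fun ω => g1 (X ω)) =ᵐ[μ]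
      μ[fun ω => if Z ω = 1 then (1 : ℝ) else 0|MeasurableSpace.comap X inferInstance])
    -- positivity: G(s−|Z,X) > 0 and F(s|Z,X) < 1 for s ≤ t
    (hpos : ∀ᵐ ω ∂μ, ∀ s ≤ t, 0 < Gm s (Z ω, X ω) ∧ F s (Z ω, X ω) < 1)
    -- the outcome augmentation term D^R
    (DR : Ω → ℝ)
    (hDR : ∀ ω, DR ω =
      ∑ s ∈ Finset.range (t + 1),
        (2 * Z ω - 1) / (if Z ω = 1 then g1 (X ω) else 1 - g1 (X ω)) *
          ((1 - F t (Z ω, X ω)) / ((1 - F s (Z ω, X ω)) * Gm s (Z ω, X ω))) *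
          ((if min (T ω) (C ω) = s ∧ T ω ≤ C ω then (1 : ℝ) else 0) -
            (if s ≤ min (T ω) (C ω) then (1 : ℝ) else 0) * lam s (Z ω, X ω))) :
    (μ[DR|MeasurableSpace.comap (fun ω => (Z ω, X ω)) inferInstance] =ᵐ[μ]
        fun _ => (0 : ℝ)) ∧
      ∫ ω, DR ω ∂μ = 0 := by
  set m := MeasurableSpace.comap (fun ω => (Z ω, X ω)) inferInstance
  by_cases hint : Integrable DR μ
  swap
  · exact ⟨by rw [condExp_of_not_integrable hint]; rfl, integral_undef hint⟩
  have hZXm : Measurable[m] fun ω => (Z ω, X ω) := comap_measurable _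
  have hlam_eq : ∀ᵐ ω ∂μ, ∀ s : Fin (t + 1), lam s (Z ω, X ω) = condHazard μ m T s ω := by
    refine ae_all_iff.2 fun s => ae_eq_condHazard (hlam s) ?_
    filter_upwards [hF s, hpos, one_sub_condExp_le_le_condExp_ge hZXle hT s]
      with ω hFω hposω hsurv
    linarith [(hposω s s.is_le).2]
  let w : Fin (t + 1) → Ω → ℝ := fun s ω =>
    (2 * Z ω - 1) / (if Z ω = 1 then g1 (X ω) else 1 - g1 (X ω)) *
      ((1 - F t (Z ω, X ω)) / ((1 - F s (Z ω, X ω)) * Gm s (Z ω, X ω)))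
  have hZm : Measurable[m] Z := measurable_fst.comp hZXm
  have hg1m : AEStronglyMeasurable[m] (fun ω => g1 (X ω)) μ :=
    aestronglyMeasurable_of_ae_eq_condExp (measurable_snd.comp hZXm).comap_le hg1
  have hw : ∀ s, AEStronglyMeasurable[m] (w s) μ := fun s =>
    (((hZm.const_mul 2).sub measurable_const).aestronglyMeasurable.div₀
      (.ite (hZm (measurableSet_singleton 1)) hg1m (aestronglyMeasurable_const.sub hg1m))).mul
    ((aestronglyMeasurable_const.sub (aestronglyMeasurable_of_ae_eq_condExp le_rfl (hF t))).div₀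
      ((aestronglyMeasurable_const.sub (aestronglyMeasurable_of_ae_eq_condExp le_rfl (hF s))).mul
        (aestronglyMeasurable_of_ae_eq_condExp le_rfl (hGm s))))
  have hDRsum : DR =ᵐ[μ] fun ω => ∑ s, w s ω * compensatedIncrement μ m T C s ω := by
    filter_upwards [hlam_eq] with ω hω
    rw [hDR ω, Finset.sum_range]
    refine Finset.sum_congr rfl fun s _ => ?_
    simp only [w, compensatedIncrement, Pi.sub_apply, Pi.mul_apply, ← hω s, le_min_iff]
    congr 3
    exact propext (by omega)
  have hmean : μ[DR | m] =ᵐ[μ] 0 := (condExp_congr_ae hDRsum).trans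
    (condExp_sum_mul_compensatedIncrement hZXle hT hC hindep hw (hint.congr hDRsum))
  refine ⟨hmean, ?_⟩
  rw [← integral_condExp hZXle, integral_congr_ae hmean]
  exact integral_zero _ _

/-- The outcome augmentation term `D^R` of the efficient influence function has
conditional mean zero given `(Z,X)`, hence mean zero.  Discrete-time right-censored
setting: `T̃ = min(T,C)`, `dN(s) = 1(T̃ = s, T ≤ C)`, `F(s|Z,X) = P(T ≤ s|Z,X)`,
`G(s−|Z,X) = P(C ≥ s|Z,X)`, hazard `λ(s|Z,X)` with
`λ(s|Z,X)·P(T ≥ s|Z,X) = P(T = s|Z,X)`, instrument prevalence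
`γ(z|X) = P(Z=z|X) ∈ (0,1)`, and `T ⊥ C | (Z,X)`. -/
theorem outcome_augmentation_mean_zero
    {Ω : Type*} [mΩ : MeasurableSpace Ω] [StandardBorelSpace Ω] [Nonempty Ω]
    (μ : Measure Ω) [IsProbabilityMeasure μ]
    (T C : Ω → ℕ) (Z X : Ω → ℝ) (t : ℕ)
    (hT : Measurable T) (hC : Measurable C) (hZ : Measurable Z) (hX : Measurable X)
    (hZbin : ∀ ω, Z ω = 0 ∨ Z ω = 1)
    (hZXle : MeasurableSpace.comap (fun ω => (Z ω, X ω)) inferInstance ≤ mΩ)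
    -- noninformative censoring given (Z,X)
    (hindep : CondIndepFun (MeasurableSpace.comap (fun ω => (Z ω, X ω)) inferInstance)
      hZXle T C μ)
    -- conditional CIF F(s|Z,X) = P(T ≤ s | Z,X)
    (F : ℕ → ℝ × ℝ → ℝ)
    (hF : ∀ s : ℕ, (fun ω => F s (Z ω, X ω)) =ᵐ[μ]
      μ[fun ω => if T ω ≤ s then (1 : ℝ) else 0|
        MeasurableSpace.comap (fun ω => (Z ω, X ω)) inferInstance])
    -- left-limit censoring survival G(s−|Z,X) = P(C ≥ s | Z,X)
    (Gm : ℕ → ℝ × ℝ → ℝ)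
    (hGm : ∀ s : ℕ, (fun ω => Gm s (Z ω, X ω)) =ᵐ[μ]
      μ[fun ω => if s ≤ C ω then (1 : ℝ) else 0|
        MeasurableSpace.comap (fun ω => (Z ω, X ω)) inferInstance])
    -- discrete hazard λ(s|Z,X) : λ·P(T ≥ s|Z,X) = P(T = s|Z,X)
    (lam : ℕ → ℝ × ℝ → ℝ)
    (hlam : ∀ s : ℕ,
      (fun ω => lam s (Z ω, X ω) *
          ((μ[fun ω' => if s ≤ T ω' then (1 : ℝ) else 0|
            MeasurableSpace.comap (fun ω' => (Z ω', X ω')) inferInstance]) ω)) =ᵐ[μ]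
        μ[fun ω => if T ω = s then (1 : ℝ) else 0|
          MeasurableSpace.comap (fun ω => (Z ω, X ω)) inferInstance])
    -- instrument prevalence γ(1|X) = P(Z=1|X) ∈ (0,1)
    (g1 : ℝ → ℝ)
    (hg1 : (fun ω => g1 (X ω)) =ᵐ[μ]
      μ[fun ω => if Z ω = 1 then (1 : ℝ) else 0|MeasurableSpace.comap X inferInstance])
    (hgpos : ∀ᵐ ω ∂μ, 0 < g1 (X ω) ∧ g1 (X ω) < 1)
    -- positivity: G(s−|Z,X) > 0 and F(s|Z,X) < 1 for s ≤ t
    (hpos : ∀ᵐ ω ∂μ, ∀ s ≤ t, 0 < Gm s (Z ω, X ω) ∧ F s (Z ω, X ω) < 1)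
    -- the outcome augmentation term D^R
    (DR : Ω → ℝ)
    (hDR : ∀ ω, DR ω =
      ∑ s ∈ Finset.range (t + 1),
        (2 * Z ω - 1) / (if Z ω = 1 then g1 (X ω) else 1 - g1 (X ω)) *
          ((1 - F t (Z ω, X ω)) / ((1 - F s (Z ω, X ω)) * Gm s (Z ω, X ω))) *
          ((if min (T ω) (C ω) = s ∧ T ω ≤ C ω then (1 : ℝ) else 0) -
            (if s ≤ min (T ω) (C ω) then (1 : ℝ) else 0) * lam s (Z ω, X ω))) :
    (μ[DR|MeasurableSpace.comap (fun ω => (Z ω, X ω)) inferInstance] =ᵐ[μ]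
        fun _ => (0 : ℝ)) ∧
      ∫ ω, DR ω ∂μ = 0 :=
  outcome_augmentation_mean_zero_general (mΩ := mΩ) μ T C Z X t hT hC hZXle hindep F hF Gm hGm lam
    hlam g1 hg1 hpos DR hDR
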